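/- In a game with a bisimulation equivalence ∼ respecting the partition and the gain functions, if there exists a subgame perfect equilibrium σ in (G, v₀) with gain profile p, then there exists a Nash equilibrium in the quotient game (G̃, [v₀]) with gain profile p. -/

import Mathlib

/-- A history: a finite path starting at `v0`. -/
def IsHist {V : Type} (E : V → V → Prop) (v0 : V) (h : List V) : Prop :=
  h.head? = some v0 ∧ h.Chain' E

/-- Last vertex of a history (with default `v0`). -/
def lastOf {V : Type} (v0 : V) (h : List V) : V := h.getLast?.getD v0

/-- A strategy profile `σ : P → List V → V` is valid if on every history it
proposes a successor of the last vertex. -/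
def ValidProfile {V P : Type} (E : V → V → Prop) (owner : V → P) (v0 : V)
    (σ : P → List V → V) : Prop :=
  ∀ h, IsHist E v0 h → E (lastOf v0 h) (σ (owner (lastOf v0 h)) h)

/-- The successive histories produced by playing `σ` after the history `h0`. -/
def outHistFrom {V P : Type} (owner : V → P) (σ : P → List V → V) (v0 : V) (h0 : List V) :
    ℕ → List V
  | 0 => h0
  | n + 1 =>
      outHistFrom owner σ v0 h0 n ++
        [σ (owner (lastOf v0 (outHistFrom owner σ v0 h0 n))) (outHistFrom owner σ v0 h0 n)]

/-- The infinite play obtained by the history `h0` followed by the outcome of `σ`. -/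
def playFrom {V P : Type} (owner : V → P) (σ : P → List V → V) (v0 : V) (h0 : List V)
    (n : ℕ) : V :=
  (outHistFrom owner σ v0 h0 (n + 1)).getD n v0

/-- The outcome of the strategy profile `σ` from `v0`. -/
def outcomeSeq {V P : Type} (owner : V → P) (σ : P → List V → V) (v0 : V) : ℕ → V :=
  playFrom owner σ v0 [v0]

/-- `σ` is a Nash equilibrium from `v0`: no player has a profitable deviation. -/
def IsNE {V P : Type} [DecidableEq P] (E : V → V → Prop) (owner : V → P) (v0 : V)
    (Gain : P → (ℕ → V) → Prop) (σ : P → List V → V) : Prop :=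
  ∀ (i : P) (σ' : List V → V), (∀ h, IsHist E v0 h → E (lastOf v0 h) (σ' h)) →
    Gain i (outcomeSeq owner (Function.update σ i σ') v0) → Gain i (outcomeSeq owner σ v0)

/-- `σ` is a subgame perfect equilibrium from `v0`: after every history, no player has a
profitable deviation (gains being evaluated on the full play extending the history). -/
def IsSPE {V P : Type} [DecidableEq P] (E : V → V → Prop) (owner : V → P) (v0 : V)
    (Gain : P → (ℕ → V) → Prop) (σ : P → List V → V) : Prop :=
  ∀ h0, IsHist E v0 h0 →
    ∀ (i : P) (σ' : List V → V), (∀ h, IsHist E v0 h → E (lastOf v0 h) (σ' h)) →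
      Gain i (playFrom owner (Function.update σ i σ') v0 h0) →
      Gain i (playFrom owner σ v0 h0)

/-- `σ` is uniform w.r.t. the relation `r`: on componentwise `r`-related histories,
each player's choices are `r`-related. -/
def Uniform {V P : Type} (E : V → V → Prop) (v0 : V) (r : V → V → Prop)
    (σ : P → List V → V) : Prop :=
  ∀ (i : P) (h h' : List V), IsHist E v0 h → IsHist E v0 h' → List.Forall₂ r h h' →
    r (σ i h) (σ i h')

/-- Edges of the quotient game. -/
def QEdge {V : Type} (s : Setoid V) (E : V → V → Prop) :
    Quotient s → Quotient s → Prop :=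
  fun c c' => ∃ v v', Quotient.mk s v = c ∧ Quotient.mk s v' = c' ∧ E v v'

/-!
At a history of the quotient game, each player plays the class of the move of `σ` at a canonical
lift of that history to `G`. The lift is built step by step: the bisimulation provides a successor
in each prescribed class, and the move of `σ` is taken whenever it lies in that class, so the lift
of the outcome of the quotient profile is the outcome of `σ`. A deviation of player `i` in the
quotient lifts in the same way to a deviation of `i` in `G` whose outcome projects onto the
deviating quotient outcome. Gains only depend on classes, so a profitable deviation in the
quotient would give one from `σ` in `G`, impossible since an SPE is in particular an NE.
-/

section Histories

variable {V : Type} {E : V → V → Prop} {v0 : V}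

theorem IsHist.ne_nil {h : List V} (hh : IsHist E v0 h) : h ≠ [] := by
  rintro rfl
  simp [IsHist] at hh

theorem isHist_singleton : IsHist E v0 [v0] := ⟨rfl, List.isChain_singleton _⟩

theorem lastOf_eq_getLast {h : List V} (hne : h ≠ []) : lastOf v0 h = h.getLast hne := by
  simp [lastOf, List.getLast?_eq_some_getLast hne]

theorem isHist_concat_iff {g : List V} (hg : g ≠ []) {w : V} :
    IsHist E v0 (g ++ [w]) ↔ IsHist E v0 g ∧ E (lastOf v0 g) w := by
  change _ ∧ List.IsChain E _ ↔ (_ ∧ List.IsChain E _) ∧ _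
  simp [List.head?_append_of_ne_nil _ hg, List.isChain_append,
    lastOf_eq_getLast hg, List.getLast?_eq_some_getLast hg, and_assoc]

theorem lastOf_map {W : Type} (f : V → W) (h : List V) :
    lastOf (f v0) (h.map f) = f (lastOf v0 h) := by
  simp only [lastOf, List.getLast?_map]
  cases h.getLast? <;> rfl

theorem IsHist.map {W : Type} {Q : W → W → Prop} {f : V → W} (hf : ∀ v w, E v w → Q (f v) (f w))
    {h : List V} (hh : IsHist E v0 h) : IsHist Q (f v0) (h.map f) :=
  ⟨by simp [hh.1], (List.isChain_map f).2 (hh.2.imp hf)⟩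

end Histories

section Profiles

variable {V P : Type} {E : V → V → Prop} {owner : V → P} {v0 : V}

def nextMove (owner : V → P) (v0 : V) (σ : P → List V → V) (h : List V) : V :=
  σ (owner (lastOf v0 h)) h

theorem outHistFrom_succ (σ : P → List V → V) (h0 : List V) (n : ℕ) :
    outHistFrom owner σ v0 h0 (n + 1) =
      outHistFrom owner σ v0 h0 n ++ [nextMove owner v0 σ (outHistFrom owner σ v0 h0 n)] :=
  rfl

theorem ValidProfile.isHist_outHistFrom {σ : P → List V → V} (hσ : ValidProfile E owner v0 σ)
    {h0 : List V} (hh : IsHist E v0 h0) : ∀ n, IsHist E v0 (outHistFrom owner σ v0 h0 n)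
  | 0 => hh
  | n + 1 => by
    have hn := hσ.isHist_outHistFrom hh n
    rw [outHistFrom_succ, isHist_concat_iff hn.ne_nil]
    exact ⟨hn, hσ _ hn⟩

theorem nextMove_update_of_eq [DecidableEq P] (σ : P → List V → V) {i : P} (σ' : List V → V)
    {h : List V} (hi : owner (lastOf v0 h) = i) :
    nextMove owner v0 (Function.update σ i σ') h = σ' h := by
  rw [nextMove, hi, Function.update_self]

theorem nextMove_update_of_ne [DecidableEq P] (σ : P → List V → V) {i : P} (σ' : List V → V)
    {h : List V} (hi : owner (lastOf v0 h) ≠ i) :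
    nextMove owner v0 (Function.update σ i σ') h = nextMove owner v0 σ h := by
  rw [nextMove, Function.update_of_ne hi, nextMove]

theorem ValidProfile.update [DecidableEq P] {σ : P → List V → V} (hσ : ValidProfile E owner v0 σ)
    (i : P) {σ' : List V → V} (hσ' : ∀ h, IsHist E v0 h → E (lastOf v0 h) (σ' h)) :
    ValidProfile E owner v0 (Function.update σ i σ') := by
  intro h hh
  by_cases hi : owner (lastOf v0 h) = i
  · rw [hi, Function.update_self]
    exact hσ' h hh
  · rw [Function.update_of_ne hi]
    exact hσ h hh

theorem outcomeSeq_eq_of_map_outHistFrom {W Q : Type} {qowner : W → Q} {f : V → W}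
    {σ : P → List V → V} {τ : Q → List W → W}
    (hστ : ∀ n, (outHistFrom owner σ v0 [v0] n).map f = outHistFrom qowner τ (f v0) [f v0] n)
    (n : ℕ) : outcomeSeq qowner τ (f v0) n = f (outcomeSeq owner σ v0 n) := by
  rw [outcomeSeq, playFrom, ← hστ, List.getD_map]
  rfl

theorem IsSPE.isNE [DecidableEq P] {Gain : P → (ℕ → V) → Prop} {σ : P → List V → V}
    (hσ : IsSPE E owner v0 Gain σ) : IsNE E owner v0 Gain σ :=
  hσ [v0] isHist_singleton

end Profiles

section Lifting

variable {V : Type} {E : V → V → Prop} {s : Setoid V} {v0 : V}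

theorem exists_succ_of_qEdge (hbisim : ∀ v v' w, s.r v v' → E v w → ∃ w', E v' w' ∧ s.r w w')
    {u : V} {c : Quotient s} (hc : QEdge s E (Quotient.mk s u) c) :
    ∃ w, E u w ∧ Quotient.mk s w = c := by
  obtain ⟨v, v', hv, rfl, hvv'⟩ := hc
  obtain ⟨w, huw, hv'w⟩ := hbisim v u v' (Quotient.exact hv) hvv'
  exact ⟨w, huw, Quotient.sound (s.symm hv'w)⟩

open Classical in
noncomputable def succInClass (E : V → V → Prop) (s : Setoid V) (u w : V) (c : Quotient s) : V :=
  if E u w ∧ Quotient.mk s w = c then w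
  else if h : ∃ w', E u w' ∧ Quotient.mk s w' = c then h.choose else w

theorem succInClass_spec {u w : V} {c : Quotient s} (h : ∃ w', E u w' ∧ Quotient.mk s w' = c) :
    E u (succInClass E s u w c) ∧ Quotient.mk s (succInClass E s u w c) = c := by
  unfold succInClass
  split_ifs with hw
  · exact hw
  · exact h.choose_spec

theorem succInClass_self {u w : V} (huw : E u w) : succInClass E s u w (Quotient.mk s w) = w :=
  if_pos ⟨huw, rfl⟩

/-- The first entry of `ht` is discarded: it stands for the class of `v0`. -/
noncomputable def liftHist (E : V → V → Prop) (s : Setoid V) (v0 : V) (d : List V → V)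
    (ht : List (Quotient s)) : List V :=
  ht.tail.foldl (fun g c => g ++ [succInClass E s (lastOf v0 g) (d g) c]) [v0]

theorem liftHist_concat (d : List V → V) {ht : List (Quotient s)} (hne : ht ≠ [])
    (c : Quotient s) :
    liftHist E s v0 d (ht ++ [c]) =
      liftHist E s v0 d ht ++
        [succInClass E s (lastOf v0 (liftHist E s v0 d ht)) (d (liftHist E s v0 d ht)) c] := by
  rw [liftHist, List.tail_append_of_ne_nil hne, List.foldl_concat]
  rfl

theorem liftHist_spec (hbisim : ∀ v v' w, s.r v v' → E v w → ∃ w', E v' w' ∧ s.r w w')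
    (d : List V → V) {ht : List (Quotient s)} (hht : IsHist (QEdge s E) (Quotient.mk s v0) ht) :
    IsHist E v0 (liftHist E s v0 d ht) ∧ (liftHist E s v0 d ht).map (Quotient.mk s) = ht := by
  induction ht using List.reverseRecOn with
  | nil => exact absurd rfl hht.ne_nil
  | append_singleton l c ih =>
    rcases eq_or_ne l [] with rfl | hne
    · obtain rfl : c = Quotient.mk s v0 := by simpa [IsHist] using hht.1
      exact ⟨isHist_singleton, rfl⟩
    · obtain ⟨hl, hlc⟩ := (isHist_concat_iff hne).1 hht
      obtain ⟨hlift, hmap⟩ := ih hl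
      rw [← hmap, lastOf_map] at hlc
      obtain ⟨hE, hc⟩ := succInClass_spec (w := d (liftHist E s v0 d l))
        (exists_succ_of_qEdge hbisim hlc)
      rw [liftHist_concat d hne, isHist_concat_iff hlift.ne_nil, List.map_append, hmap,
        List.map_singleton, hc]
      exact ⟨⟨hlift, hE⟩, rfl⟩

theorem lastOf_liftHist (hbisim : ∀ v v' w, s.r v v' → E v w → ∃ w', E v' w' ∧ s.r w w')
    (d : List V → V) {ht : List (Quotient s)} (hht : IsHist (QEdge s E) (Quotient.mk s v0) ht) :
    lastOf (Quotient.mk s v0) ht = Quotient.mk s (lastOf v0 (liftHist E s v0 d ht)) := by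
  conv_lhs => rw [← (liftHist_spec hbisim d hht).2]
  exact lastOf_map _ _

end Lifting

section QuotientProfile

variable {V P : Type} {E : V → V → Prop} {s : Setoid V} {owner : V → P}
  {qowner : Quotient s → P} {v0 : V}

theorem liftHist_outHistFrom (d : List V → V) {S : P → List V → V}
    {T : P → List (Quotient s) → Quotient s}
    (hT : ValidProfile (QEdge s E) qowner (Quotient.mk s v0) T)
    (hST : ∀ ht, IsHist (QEdge s E) (Quotient.mk s v0) ht →
      nextMove owner v0 S (liftHist E s v0 d ht) =
        succInClass E s (lastOf v0 (liftHist E s v0 d ht)) (d (liftHist E s v0 d ht))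
          (nextMove qowner (Quotient.mk s v0) T ht)) :
    ∀ n, liftHist E s v0 d (outHistFrom qowner T (Quotient.mk s v0) [Quotient.mk s v0] n) =
      outHistFrom owner S v0 [v0] n
  | 0 => rfl
  | n + 1 => by
    have hn := hT.isHist_outHistFrom isHist_singleton n
    rw [outHistFrom_succ, outHistFrom_succ, liftHist_concat d hn.ne_nil, ← hST _ hn,
      liftHist_outHistFrom d hT hST n]

theorem outcomeSeq_eq_of_liftHist
    (hbisim : ∀ v v' w, s.r v v' → E v w → ∃ w', E v' w' ∧ s.r w w') (d : List V → V)
    {S : P → List V → V} {T : P → List (Quotient s) → Quotient s}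
    (hT : ValidProfile (QEdge s E) qowner (Quotient.mk s v0) T)
    (hST : ∀ ht, IsHist (QEdge s E) (Quotient.mk s v0) ht →
      nextMove owner v0 S (liftHist E s v0 d ht) =
        succInClass E s (lastOf v0 (liftHist E s v0 d ht)) (d (liftHist E s v0 d ht))
          (nextMove qowner (Quotient.mk s v0) T ht))
    (n : ℕ) : outcomeSeq qowner T (Quotient.mk s v0) n = Quotient.mk s (outcomeSeq owner S v0 n) :=
  outcomeSeq_eq_of_map_outHistFrom (fun n => by
    rw [← liftHist_outHistFrom d hT hST n]
    exact (liftHist_spec hbisim d (hT.isHist_outHistFrom isHist_singleton n)).2) n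

noncomputable def quotProfile (E : V → V → Prop) (s : Setoid V) (owner : V → P) (v0 : V)
    (σ : P → List V → V) : P → List (Quotient s) → Quotient s :=
  fun j ht => Quotient.mk s (σ j (liftHist E s v0 (nextMove owner v0 σ) ht))

theorem nextMove_quotProfile (hbisim : ∀ v v' w, s.r v v' → E v w → ∃ w', E v' w' ∧ s.r w w')
    (hqowner : ∀ v, qowner (Quotient.mk s v) = owner v) (σ : P → List V → V)
    {ht : List (Quotient s)} (hht : IsHist (QEdge s E) (Quotient.mk s v0) ht) :
    nextMove qowner (Quotient.mk s v0) (quotProfile E s owner v0 σ) ht =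
      Quotient.mk s (nextMove owner v0 σ (liftHist E s v0 (nextMove owner v0 σ) ht)) := by
  rw [nextMove, lastOf_liftHist hbisim _ hht, hqowner]
  rfl

theorem validProfile_quotProfile
    (hbisim : ∀ v v' w, s.r v v' → E v w → ∃ w', E v' w' ∧ s.r w w')
    (hqowner : ∀ v, qowner (Quotient.mk s v) = owner v) {σ : P → List V → V}
    (hσ : ValidProfile E owner v0 σ) :
    ValidProfile (QEdge s E) qowner (Quotient.mk s v0) (quotProfile E s owner v0 σ) := by
  intro ht hht
  change QEdge s E _ (nextMove qowner (Quotient.mk s v0) (quotProfile E s owner v0 σ) ht)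
  rw [lastOf_liftHist hbisim (nextMove owner v0 σ) hht, nextMove_quotProfile hbisim hqowner σ hht]
  exact ⟨_, _, rfl, rfl, hσ _ (liftHist_spec hbisim _ hht).1⟩

theorem outcomeSeq_quotProfile
    (hbisim : ∀ v v' w, s.r v v' → E v w → ∃ w', E v' w' ∧ s.r w w')
    (hqowner : ∀ v, qowner (Quotient.mk s v) = owner v) {σ : P → List V → V}
    (hσ : ValidProfile E owner v0 σ) (n : ℕ) :
    outcomeSeq qowner (quotProfile E s owner v0 σ) (Quotient.mk s v0) n =
      Quotient.mk s (outcomeSeq owner σ v0 n) :=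
  outcomeSeq_eq_of_liftHist hbisim (nextMove owner v0 σ)
    (validProfile_quotProfile hbisim hqowner hσ) (fun _ hht => by
      rw [nextMove_quotProfile hbisim hqowner σ hht]
      exact (succInClass_self (hσ _ (liftHist_spec hbisim _ hht).1)).symm) n

noncomputable def liftDeviation (E : V → V → Prop) (s : Setoid V) (v0 : V) (σi : List V → V)
    (τ' : List (Quotient s) → Quotient s) : List V → V :=
  fun h => succInClass E s (lastOf v0 h) (σi h) (τ' (h.map (Quotient.mk s)))

theorem liftDeviation_valid (hbisim : ∀ v v' w, s.r v v' → E v w → ∃ w', E v' w' ∧ s.r w w')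
    (σi : List V → V) {τ' : List (Quotient s) → Quotient s}
    (hτ' : ∀ ht, IsHist (QEdge s E) (Quotient.mk s v0) ht →
      QEdge s E (lastOf (Quotient.mk s v0) ht) (τ' ht))
    {h : List V} (hh : IsHist E v0 h) : E (lastOf v0 h) (liftDeviation E s v0 σi τ' h) := by
  have hq := hτ' _ (hh.map fun v w hvw => ⟨v, w, rfl, rfl, hvw⟩)
  rw [lastOf_map] at hq
  exact (succInClass_spec (exists_succ_of_qEdge hbisim hq)).1

theorem outcomeSeq_update_quotProfile [DecidableEq P]
    (hbisim : ∀ v v' w, s.r v v' → E v w → ∃ w', E v' w' ∧ s.r w w')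
    (hqowner : ∀ v, qowner (Quotient.mk s v) = owner v) {σ : P → List V → V}
    (hσ : ValidProfile E owner v0 σ) (i : P) {τ' : List (Quotient s) → Quotient s}
    (hτ' : ∀ ht, IsHist (QEdge s E) (Quotient.mk s v0) ht →
      QEdge s E (lastOf (Quotient.mk s v0) ht) (τ' ht)) (n : ℕ) :
    outcomeSeq qowner (Function.update (quotProfile E s owner v0 σ) i τ') (Quotient.mk s v0) n =
      Quotient.mk s
        (outcomeSeq owner (Function.update σ i (liftDeviation E s v0 (σ i) τ')) v0 n) := by
  refine outcomeSeq_eq_of_liftHist hbisim (nextMove owner v0 σ)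
    ((validProfile_quotProfile hbisim hqowner hσ).update i hτ') (fun ht hht => ?_) n
  obtain ⟨hlift, hmap⟩ := liftHist_spec hbisim (nextMove owner v0 σ) hht
  have hlast := lastOf_liftHist hbisim (nextMove owner v0 σ) hht
  by_cases hi : owner (lastOf v0 (liftHist E s v0 (nextMove owner v0 σ) ht)) = i
  · have hqi : qowner (lastOf (Quotient.mk s v0) ht) = i := by rw [hlast, hqowner, hi]
    rw [nextMove_update_of_eq _ _ hi, nextMove_update_of_eq _ _ hqi, liftDeviation, hmap,
      nextMove, hi]
  · have hqi : qowner (lastOf (Quotient.mk s v0) ht) ≠ i := by rwa [hlast, hqowner]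
    rw [nextMove_update_of_ne _ _ hi, nextMove_update_of_ne _ _ hqi,
      nextMove_quotProfile hbisim hqowner σ hht]
    exact (succInClass_self (hσ _ hlift)).symm

theorem isNE_quotProfile [DecidableEq P] {Gain : P → (ℕ → V) → Prop}
    {qGain : P → (ℕ → Quotient s) → Prop}
    (hbisim : ∀ v v' w, s.r v v' → E v w → ∃ w', E v' w' ∧ s.r w w')
    (hqowner : ∀ v, qowner (Quotient.mk s v) = owner v)
    (hgain : ∀ (i : P) (ρ : ℕ → V) (ρt : ℕ → Quotient s),
      (∀ n, Quotient.mk s (ρ n) = ρt n) → (Gain i ρ ↔ qGain i ρt))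
    {σ : P → List V → V} (hσ : ValidProfile E owner v0 σ) (hNE : IsNE E owner v0 Gain σ) :
    IsNE (QEdge s E) qowner (Quotient.mk s v0) qGain (quotProfile E s owner v0 σ) := by
  intro i τ' hτ' hdev
  have hliftDev := hNE i (liftDeviation E s v0 (σ i) τ')
    (fun _ hh => liftDeviation_valid hbisim (σ i) hτ' hh)
    ((hgain i _ _ fun n => (outcomeSeq_update_quotProfile hbisim hqowner hσ i hτ' n).symm).2 hdev)
  exact (hgain i _ _ fun n => (outcomeSeq_quotProfile hbisim hqowner hσ n).symm).1 hliftDev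

end QuotientProfile

theorem stmt19_general {V P : Type} [DecidableEq P] (E : V → V → Prop) (owner : V → P) (v0 : V)
    (Gain : P → (ℕ → V) → Prop) (s : Setoid V)
    (hbisim : ∀ v v' w, s.r v v' → E v w → ∃ w', E v' w' ∧ s.r w w')
    (qowner : Quotient s → P) (hqowner : ∀ v, qowner (Quotient.mk s v) = owner v)
    (qGain : P → (ℕ → Quotient s) → Prop)
    (hgain₂ : ∀ (i : P) (ρ : ℕ → V) (ρt : ℕ → Quotient s),
      (∀ n, Quotient.mk s (ρ n) = ρt n) → (Gain i ρ ↔ qGain i ρt))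
    (p : P → Prop)
    (hexists : ∃ σ : P → List V → V, ValidProfile E owner v0 σ ∧
      IsSPE E owner v0 Gain σ ∧ ∀ i, Gain i (outcomeSeq owner σ v0) ↔ p i) :
    ∃ τ : P → List (Quotient s) → Quotient s,
      ValidProfile (QEdge s E) qowner (Quotient.mk s v0) τ ∧
      IsNE (QEdge s E) qowner (Quotient.mk s v0) qGain τ ∧
      ∀ i, qGain i (outcomeSeq qowner τ (Quotient.mk s v0)) ↔ p i := by
  obtain ⟨σ, hσ, hSPE, hp⟩ := hexists
  refine ⟨quotProfile E s owner v0 σ, validProfile_quotProfile hbisim hqowner hσ,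
    isNE_quotProfile hbisim hqowner hgain₂ hσ hSPE.isNE, fun i => ?_⟩
  rw [← hp i]
  exact (hgain₂ i _ _ fun n => (outcomeSeq_quotProfile hbisim hqowner hσ n).symm).symm

/-- If a game with a bisimulation equivalence respecting the partition and the gain
functions has an SPE with gain profile `p`, then its quotient game has a Nash
equilibrium with gain profile `p`. -/
theorem stmt19 {V P : Type} [DecidableEq P] (E : V → V → Prop) (owner : V → P) (v0 : V)
    (Gain : P → (ℕ → V) → Prop) (s : Setoid V)
    (hbisim : ∀ v v' w, s.r v v' → E v w → ∃ w', E v' w' ∧ s.r w w')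
    (hpart : ∀ v v', s.r v v' → owner v = owner v')
    (qowner : Quotient s → P) (hqowner : ∀ v, qowner (Quotient.mk s v) = owner v)
    (qGain : P → (ℕ → Quotient s) → Prop)
    (hgain₁ : ∀ (i : P) (ρ ρ' : ℕ → V), (∀ n, s.r (ρ n) (ρ' n)) → (Gain i ρ ↔ Gain i ρ'))
    (hgain₂ : ∀ (i : P) (ρ : ℕ → V) (ρt : ℕ → Quotient s),
      (∀ n, Quotient.mk s (ρ n) = ρt n) → (Gain i ρ ↔ qGain i ρt))
    (p : P → Prop)
    (hexists : ∃ σ : P → List V → V, ValidProfile E owner v0 σ ∧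
      IsSPE E owner v0 Gain σ ∧ ∀ i, Gain i (outcomeSeq owner σ v0) ↔ p i) :
    ∃ τ : P → List (Quotient s) → Quotient s,
      ValidProfile (QEdge s E) qowner (Quotient.mk s v0) τ ∧
      IsNE (QEdge s E) qowner (Quotient.mk s v0) qGain τ ∧
      ∀ i, qGain i (outcomeSeq qowner τ (Quotient.mk s v0)) ↔ p i :=
  stmt19_general E owner v0 Gain s hbisim qowner hqowner qGain hgain₂ p hexists
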